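/- Let G be a signed graph such that some facet subgraph H of G satisfies comp(H) > comp(G) + 1, where comp denotes the number of connected components. Then there exist two non-bipartite components H_1, H_2 of H lying in the same (non-bipartite) component of G; and for any i ∈ V(H_1), j ∈ V(H_2), the vector e_i + e_j lies in ℤρ(E(G)) and in the supporting hyperplane of the facet cone(P_H), but not in ℤρ(E(H)). -/

import Mathlib

open scoped BigOperators

namespace EdgeRing

/-- A signed edge on vertex set `Fin n`: endpoints `e.1`, `e.2.1` and sign `e.2.2`. -/
abbrev SEdge (n : ℕ) := Fin n × Fin n × ℤ

/-- A signed graph on `n` vertices: a set of signed edges (loops allowed, `e.1 = e.2.1`). -/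
structure SGraph (n : ℕ) where
  E : Set (SEdge n)
  sgn_unit : ∀ e ∈ E, e.2.2 = 1 ∨ e.2.2 = -1

variable {n : ℕ}

/-- `ρ(±ij) = ±(e_i + e_j)` (a loop at `i` gives `±2 e_i`), integer version. -/
def rhoZ (e : SEdge n) : Fin n → ℤ :=
  fun v => e.2.2 * ((if e.1 = v then 1 else 0) + (if e.2.1 = v then 1 else 0))

/-- real version of `rhoZ`. -/
def rhoR (e : SEdge n) : Fin n → ℝ := fun v => (rhoZ e v : ℝ)

def toR (a : Fin n → ℤ) : Fin n → ℝ := fun v => (a v : ℝ)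

def SGraph.rhoZSet (G : SGraph n) : Set (Fin n → ℤ) := {x | ∃ e ∈ G.E, x = rhoZ e}

def SGraph.rhoRSet (G : SGraph n) : Set (Fin n → ℝ) := {x | ∃ e ∈ G.E, x = rhoR e}

/-- `ℤρ(E(G))`: the subgroup of `ℤ^n` generated by the edge vectors. -/
def SGraph.lattice (G : SGraph n) : AddSubgroup (Fin n → ℤ) :=
  AddSubgroup.closure G.rhoZSet

/-- `ℤ₊ρ(E(G))`: the affine semigroup generated by the edge vectors. -/
def SGraph.sgp (G : SGraph n) : AddSubmonoid (Fin n → ℤ) :=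
  AddSubmonoid.closure G.rhoZSet

/-- adjacency via an edge of `G` (symmetric by definition). -/
def SGraph.adj (G : SGraph n) (i j : Fin n) : Prop :=
  ∃ e ∈ G.E, (e.1 = i ∧ e.2.1 = j) ∨ (e.1 = j ∧ e.2.1 = i)

/-- `G` is connected: any two vertices are joined by a walk. -/
def SGraph.Connected (G : SGraph n) : Prop :=
  ∀ i j : Fin n, Relation.ReflTransGen G.adj i j

/-- the vertex set of the connected component of `v`. -/
def SGraph.compSet (G : SGraph n) (v : Fin n) : Set (Fin n) :=
  {w | Relation.ReflTransGen G.adj v w}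

/-- `C` is (the vertex set of) a component of `G`. -/
def SGraph.IsComp (G : SGraph n) (C : Set (Fin n)) : Prop :=
  ∃ v, C = G.compSet v

/-- the edge `e` is incident to the vertex set `S`. -/
def incident (e : SEdge n) (S : Set (Fin n)) : Prop := e.1 ∈ S ∨ e.2.1 ∈ S

/-- the vertex set `C` is partitioned as `L ∪ R` and every edge of `G` incident to `C`
has one endpoint in `L` and one in `R`. -/
def SGraph.BipWith (G : SGraph n) (C L R : Set (Fin n)) : Prop :=
  C = L ∪ R ∧ Disjoint L R ∧
    ∀ e ∈ G.E, incident e C → ((e.1 ∈ L ∧ e.2.1 ∈ R) ∨ (e.1 ∈ R ∧ e.2.1 ∈ L))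

/-- the vertex set `C` (e.g. a component) is bipartite in `G`. -/
def SGraph.BipOn (G : SGraph n) (C : Set (Fin n)) : Prop := ∃ L R, G.BipWith C L R

/-- `L ∪ R` is a bipartition of (all of) `G`. -/
def SGraph.IsBipartition (G : SGraph n) (L R : Set (Fin n)) : Prop :=
  G.BipWith Set.univ L R

def SGraph.Bipartite (G : SGraph n) : Prop := ∃ L R, G.IsBipartition L R

/-- `comp G`: the number of connected components of `G`. -/
noncomputable def SGraph.comp (G : SGraph n) : ℕ := Nat.card {C : Set (Fin n) // G.IsComp C}

/-- `bicomp G`: the number of bipartite connected components of `G`. -/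
noncomputable def SGraph.bicomp (G : SGraph n) : ℕ :=
  Nat.card {C : Set (Fin n) // G.IsComp C ∧ G.BipOn C}

/-- the dual vector `e_L^* - e_R^*` as an element of `ℝ^n`. -/
noncomputable def dvec (L R : Set (Fin n)) : Fin n → ℝ :=
  fun v => Set.indicator L (fun _ => (1 : ℝ)) v - Set.indicator R (fun _ => (1 : ℝ)) v

/-- `L, R` witness the facet-subgraph condition for the bipartite component `C` of `H`:
`C = L ∪ R` is a bipartition, and every edge of `G` not in `H` is a positive edge
incident to `L` but not `R`, or a negative edge incident to `R` but not `L`. -/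
def FacetWitness (G H : SGraph n) (C L R : Set (Fin n)) : Prop :=
  H.BipWith C L R ∧
    ∀ e ∈ G.E \ H.E,
      (e.2.2 = 1 ∧ incident e L ∧ ¬ incident e R) ∨
      (e.2.2 = -1 ∧ incident e R ∧ ¬ incident e L)

/-- `H` is a facet subgraph of `G`. -/
def IsFacetSubgraph (G H : SGraph n) : Prop :=
  H.E ⊆ G.E ∧ H.bicomp = G.bicomp + 1 ∧
    ∀ C, H.IsComp C → H.BipOn C → ¬ G.IsComp C → ∃ L R, FacetWitness G H C L R

/-- the cone generated by `S`: all nonnegative real combinations. -/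
def coneOf (S : Set (Fin n → ℝ)) : Set (Fin n → ℝ) :=
  {x | ∃ (t : Finset (Fin n → ℝ)) (c : (Fin n → ℝ) → ℝ),
    ↑t ⊆ S ∧ (∀ y, 0 ≤ c y) ∧ x = ∑ y ∈ t, c y • y}

/-- the dimension of a subset of `ℝ^n`: dimension of its linear span. -/
noncomputable def sdim (S : Set (Fin n → ℝ)) : ℕ := Module.finrank ℝ (Submodule.span ℝ S)

/-- `F` is a face of the cone `C`, cut out by a supporting linear form. -/
def IsFaceOf (C F : Set (Fin n → ℝ)) : Prop :=
  ∃ σ : (Fin n → ℝ) →ₗ[ℝ] ℝ, (∀ x ∈ C, 0 ≤ σ x) ∧ F = C ∩ {x | σ x = 0}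

/-- `F` is a facet of the cone `C`: a proper face of dimension `dim C - 1`. -/
def IsFacetOf (C F : Set (Fin n → ℝ)) : Prop :=
  IsFaceOf C F ∧ F ≠ C ∧ sdim F + 1 = sdim C

/-- the subgraph of `G` consisting of the edges inside the vertex set `C`. -/
def SGraph.restrict (G : SGraph n) (C : Set (Fin n)) : SGraph n :=
  ⟨{e ∈ G.E | e.1 ∈ C}, fun e he => G.sgn_unit e he.1⟩

/-- Vitulli's criterion for Serre's `R₁` condition for the edge ring `k[G]`
(taken here as the definition of `R₁`). -/
def SerreR1 (G : SGraph n) : Prop :=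
  ∀ F, IsFacetOf (coneOf G.rhoRSet) F →
    ∃ σ : (Fin n → ℝ) →ₗ[ℝ] ℝ,
      (∀ x ∈ coneOf G.rhoRSet, 0 ≤ σ x) ∧
      F = coneOf G.rhoRSet ∩ {x | σ x = 0} ∧
      (∀ a ∈ G.lattice, ∃ z : ℤ, σ (toR a) = z) ∧
      (∃ a ∈ G.sgp, σ (toR a) = 1) ∧
      ((AddSubgroup.closure {a : Fin n → ℤ | a ∈ G.sgp ∧ toR a ∈ F} : AddSubgroup (Fin n → ℤ)) :
          Set (Fin n → ℤ)) = {a : Fin n → ℤ | a ∈ G.lattice ∧ σ (toR a) = 0}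

/-! ### Mixed signed, directed graphs -/

/-- A mixed signed, directed graph: signed edges `SE` (loops allowed) and
directed edges `DE` (no directed loops). -/
structure MGraph (n : ℕ) where
  SE : Set (SEdge n)
  DE : Set (Fin n × Fin n)
  sgn_unit : ∀ e ∈ SE, e.2.2 = 1 ∨ e.2.2 = -1
  no_dloop : ∀ e ∈ DE, e.1 ≠ e.2

/-- `ρ((i,j)) = e_j - e_i` for a directed edge. -/
def rhoD (e : Fin n × Fin n) : Fin n → ℤ :=
  fun v => (if e.2 = v then 1 else 0) - (if e.1 = v then 1 else 0)

def MGraph.rhoZSet (G : MGraph n) : Set (Fin n → ℤ) :=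
  {x | ∃ e ∈ G.SE, x = rhoZ e} ∪ {x | ∃ e ∈ G.DE, x = rhoD e}

def MGraph.rhoRSet (G : MGraph n) : Set (Fin n → ℝ) :=
  {x | ∃ a ∈ G.rhoZSet, x = toR a}

/-- `ℤρ(E(G))` for a mixed signed, directed graph. -/
def MGraph.lattice (G : MGraph n) : AddSubgroup (Fin n → ℤ) :=
  AddSubgroup.closure G.rhoZSet

def MGraph.adj (G : MGraph n) (i j : Fin n) : Prop :=
  (∃ e ∈ G.SE, (e.1 = i ∧ e.2.1 = j) ∨ (e.1 = j ∧ e.2.1 = i)) ∨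
  (∃ e ∈ G.DE, (e.1 = i ∧ e.2 = j) ∨ (e.1 = j ∧ e.2 = i))

def MGraph.Connected (G : MGraph n) : Prop :=
  ∀ i j : Fin n, Relation.ReflTransGen G.adj i j

def MGraph.compSet (G : MGraph n) (v : Fin n) : Set (Fin n) :=
  {w | Relation.ReflTransGen G.adj v w}

def MGraph.IsComp (G : MGraph n) (C : Set (Fin n)) : Prop :=
  ∃ v, C = G.compSet v

noncomputable def MGraph.comp (G : MGraph n) : ℕ := Nat.card {C : Set (Fin n) // G.IsComp C}

/-- the directed edge `e` is incident to the vertex set `S`. -/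
def dincident (e : Fin n × Fin n) (S : Set (Fin n)) : Prop := e.1 ∈ S ∨ e.2 ∈ S

/-- Bipartiteness of the augmented signed graph of `G` on the vertex set `C`,
expressed on `G` itself: `C = L ∪ R`, every signed edge incident to `C` crosses
between `L` and `R`, and every directed edge incident to `C` has both endpoints
in the same part (its artificial vertex lies on the other side). -/
def MGraph.BipWith (G : MGraph n) (C L R : Set (Fin n)) : Prop :=
  C = L ∪ R ∧ Disjoint L R ∧
    (∀ e ∈ G.SE, incident e C → ((e.1 ∈ L ∧ e.2.1 ∈ R) ∨ (e.1 ∈ R ∧ e.2.1 ∈ L))) ∧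
    (∀ e ∈ G.DE, dincident e C → ((e.1 ∈ L ∧ e.2 ∈ L) ∨ (e.1 ∈ R ∧ e.2 ∈ R)))

def MGraph.BipOn (G : MGraph n) (C : Set (Fin n)) : Prop := ∃ L R, G.BipWith C L R

def MGraph.IsBipartition (G : MGraph n) (L R : Set (Fin n)) : Prop :=
  G.BipWith Set.univ L R

def MGraph.Bipartite (G : MGraph n) : Prop := ∃ L R, G.IsBipartition L R

/-- number of components of `G` whose augmentation is bipartite. -/
noncomputable def MGraph.bicomp (G : MGraph n) : ℕ :=
  Nat.card {C : Set (Fin n) // G.IsComp C ∧ G.BipOn C}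

/-- facet-subgraph witness for mixed signed, directed graphs. -/
def MFacetWitness (G H : MGraph n) (C L R : Set (Fin n)) : Prop :=
  H.BipWith C L R ∧
    (∀ e ∈ G.SE \ H.SE,
      (e.2.2 = 1 ∧ incident e L ∧ ¬ incident e R) ∨
      (e.2.2 = -1 ∧ incident e R ∧ ¬ incident e L)) ∧
    (∀ e ∈ G.DE \ H.DE, (e.2 ∈ L ∧ e.1 ∉ L) ∨ (e.1 ∈ R ∧ e.2 ∉ R))

/-- `H` is a facet subgraph of the mixed signed, directed graph `G`. -/
def IsMFacetSubgraph (G H : MGraph n) : Prop :=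
  H.SE ⊆ G.SE ∧ H.DE ⊆ G.DE ∧ H.bicomp = G.bicomp + 1 ∧
    ∀ C, H.IsComp C → H.BipOn C → ¬ G.IsComp C → ∃ L R, MFacetWitness G H C L R

/-! `H` has one more bipartite component than `G` but at least two more components, so it has
more non-bipartite components than `G`. A non-bipartite component of `H` lies in a non-bipartite
component of `G`, so by pigeonhole two of them, `H₁ ≠ H₂`, lie in the same one, `D`.

* `e_i + e_j ∈ ℤρ(E(G))`: following a walk, `e_v - e_w` or `e_v + e_w` lies in the lattice for
  every `w` in the component of `v`; if never both, these two classes bipartition the component.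
  Since `D` is not bipartite, `2 e_v` lies in the lattice, and then so does every `e_i + e_j`.
* `e_i + e_j ∉ ℤρ(E(H))`: every edge vector has even coordinate sum over `H₁`, while
  `e_i + e_j` has coordinate sum `1` there.
* `e_L^* - e_R^*` is supported on a bipartite component of `H`, which misses `i` and `j`. -/

lemma rhoZ_eq_smul (e : SEdge n) : rhoZ e = e.2.2 • (Pi.single e.1 1 + Pi.single e.2.1 1) := by
  funext v
  simp [rhoZ, Pi.single_apply, eq_comm]

lemma dvec_eq_zero {L R : Set (Fin n)} {v : Fin n} (hv : v ∉ L ∪ R) : dvec L R v = 0 := by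
  simp_all [dvec]

lemma sum_dvec_mul_toR_single_add_single (L R : Set (Fin n)) (i j : Fin n) :
    ∑ v, dvec L R v * toR (Pi.single i 1 + Pi.single j 1 : Fin n → ℤ) v
      = dvec L R i + dvec L R j := by
  simp [toR, Pi.single_apply, mul_add, Finset.sum_add_distrib]

namespace SGraph

variable {G H : SGraph n} {i j v w : Fin n} {C D : Set (Fin n)}

lemma adj_symm (h : G.adj i j) : G.adj j i :=
  let ⟨e, he, h⟩ := h
  ⟨e, he, h.symm⟩

instance (G : SGraph n) : Std.Symm G.adj := ⟨fun _ _ => adj_symm⟩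

lemma adj_of_mem {e : SEdge n} (he : e ∈ G.E) : G.adj e.1 e.2.1 :=
  ⟨e, he, .inl ⟨rfl, rfl⟩⟩

lemma compSet_eq_of_mem (h : w ∈ G.compSet v) : G.compSet w = G.compSet v := by
  ext u
  exact ⟨fun hu => h.trans hu, fun hu => (Std.Symm.symm _ _ h).trans hu⟩

lemma IsComp.disjoint {C₁ C₂ : Set (Fin n)} (h₁ : G.IsComp C₁) (h₂ : G.IsComp C₂)
    (hne : C₁ ≠ C₂) : Disjoint C₁ C₂ := by
  obtain ⟨v₁, rfl⟩ := h₁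
  obtain ⟨v₂, rfl⟩ := h₂
  refine Set.disjoint_left.mpr fun u hu₁ hu₂ => hne ?_
  rw [← compSet_eq_of_mem hu₁, compSet_eq_of_mem hu₂]

lemma IsComp.mem_iff {e : SEdge n} (hC : G.IsComp C) (he : e ∈ G.E) : e.1 ∈ C ↔ e.2.1 ∈ C := by
  obtain ⟨v, rfl⟩ := hC
  exact ⟨fun h => h.tail (adj_of_mem he), fun h => h.tail (adj_symm (adj_of_mem he))⟩

lemma IsComp.mem_and_mem {e : SEdge n} (hC : G.IsComp C) (he : e ∈ G.E) (hinc : incident e C) :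
    e.1 ∈ C ∧ e.2.1 ∈ C := by
  have := hC.mem_iff he
  rcases hinc with h | h <;> tauto

lemma compSet_mono (hHG : H.E ⊆ G.E) (v : Fin n) : H.compSet v ⊆ G.compSet v :=
  fun _ hw => Relation.ReflTransGen.mono (fun _ _ ⟨e, he, h⟩ => ⟨e, hHG he, h⟩) _ _ hw

lemma biUnion_compSet_eq (hHG : H.E ⊆ G.E) (w : Fin n) :
    ⋃ v ∈ H.compSet w, G.compSet v = G.compSet w :=
  (Set.iUnion₂_subset fun _ hv => (compSet_eq_of_mem (compSet_mono hHG w hv)).le).antisymm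
    (Set.subset_biUnion_of_mem (u := G.compSet) (Relation.ReflTransGen.refl : H.compSet w w))

lemma BipOn.of_subset (hHG : H.E ⊆ G.E) (hC : H.IsComp C) (hCD : C ⊆ D) (hD : G.BipOn D) :
    H.BipOn C := by
  obtain ⟨L, R, hDLR, hdisj, hcross⟩ := hD
  refine ⟨L ∩ C, R ∩ C, ?_, hdisj.mono Set.inter_subset_left Set.inter_subset_left, ?_⟩
  · rw [← Set.union_inter_distrib_right, ← hDLR, Set.inter_eq_right.mpr hCD]
  · intro e he hinc
    have hboth := hC.mem_and_mem he hinc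
    rcases hcross e (hHG he) (.inl (hCD hboth.1)) with h | h
    · exact .inl ⟨⟨h.1, hboth.1⟩, h.2, hboth.2⟩
    · exact .inr ⟨⟨h.1, hboth.1⟩, h.2, hboth.2⟩

def nonbipComps (G : SGraph n) : Set (Set (Fin n)) := {C | G.IsComp C ∧ ¬ G.BipOn C}

lemma comp_eq_bicomp_add_ncard_nonbipComps (G : SGraph n) :
    G.comp = G.bicomp + G.nonbipComps.ncard := by
  have hsplit : {C | G.IsComp C} = {C | G.IsComp C ∧ G.BipOn C} ∪ G.nonbipComps := by
    ext C
    by_cases h : G.BipOn C <;> simp [nonbipComps, h]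
  have hdisj : Disjoint {C | G.IsComp C ∧ G.BipOn C} G.nonbipComps :=
    Set.disjoint_left.mpr fun _ h h' => h'.2 h.2
  change Set.ncard {C | G.IsComp C} = Set.ncard {C | G.IsComp C ∧ G.BipOn C} + _
  rw [hsplit, Set.ncard_union_eq hdisj]

lemma exists_ne_nonbipComps_subset (hHG : H.E ⊆ G.E)
    (hlt : G.nonbipComps.ncard < H.nonbipComps.ncard) :
    ∃ C₁ ∈ H.nonbipComps, ∃ C₂ ∈ H.nonbipComps, C₁ ≠ C₂ ∧
      ∃ D ∈ G.nonbipComps, C₁ ⊆ D ∧ C₂ ⊆ D := by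
  set hull : Set (Fin n) → Set (Fin n) := fun C => ⋃ v ∈ C, G.compSet v
  have subset_hull : ∀ C, C ⊆ hull C :=
    fun C v hv => Set.mem_biUnion hv (Relation.ReflTransGen.refl : G.compSet v v)
  have maps_to : ∀ C ∈ H.nonbipComps, hull C ∈ G.nonbipComps := by
    rintro C ⟨⟨w, rfl⟩, hnb⟩
    exact ⟨⟨w, biUnion_compSet_eq hHG w⟩, fun hD => hnb (hD.of_subset hHG ⟨w, rfl⟩ (subset_hull _))⟩
  obtain ⟨C₁, h₁, C₂, h₂, hne, hhull⟩ := Set.exists_ne_map_eq_of_ncard_lt_of_maps_to hlt maps_to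
  exact ⟨C₁, h₁, C₂, h₂, hne, hull C₁, maps_to C₁ h₁, subset_hull C₁, hhull ▸ subset_hull C₂⟩

lemma single_add_single_mem_lattice_of_adj (h : G.adj i j) :
    (Pi.single i 1 + Pi.single j 1 : Fin n → ℤ) ∈ G.lattice := by
  obtain ⟨e, he, hij⟩ := h
  have hsgn : e.2.2 * e.2.2 = 1 := by rcases G.sgn_unit e he with h | h <;> simp [h]
  have hmem : e.2.2 • rhoZ e ∈ G.lattice :=
    zsmul_mem (AddSubgroup.subset_closure (k := G.rhoZSet) ⟨e, he, rfl⟩) _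
  rw [rhoZ_eq_smul, smul_smul, hsgn, one_smul] at hmem
  rcases hij with ⟨rfl, rfl⟩ | ⟨rfl, rfl⟩
  · exact hmem
  · rwa [add_comm]

lemma single_sub_or_add_mem_lattice_of_reach (h : Relation.ReflTransGen G.adj i j) :
    (Pi.single i 1 - Pi.single j 1 : Fin n → ℤ) ∈ G.lattice ∨
      (Pi.single i 1 + Pi.single j 1 : Fin n → ℤ) ∈ G.lattice := by
  induction h with
  | refl => exact .inl (by rw [sub_self]; exact zero_mem _)
  | @tail k l _ hkl ih =>
    have hedge := single_add_single_mem_lattice_of_adj hkl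
    rcases ih with ih | ih
    · refine .inr ?_
      convert add_mem ih hedge using 1
      abel
    · refine .inl ?_
      convert sub_mem ih hedge using 1
      abel

lemma bipOn_compSet_of_notMem_lattice
    (hv : (Pi.single v 1 + Pi.single v 1 : Fin n → ℤ) ∉ G.lattice) : G.BipOn (G.compSet v) := by
  refine ⟨{w ∈ G.compSet v | (Pi.single v 1 - Pi.single w 1 : Fin n → ℤ) ∈ G.lattice},
    {w ∈ G.compSet v | (Pi.single v 1 + Pi.single w 1 : Fin n → ℤ) ∈ G.lattice}, ?_, ?_, ?_⟩
  · ext w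
    constructor
    · intro hw
      exact (single_sub_or_add_mem_lattice_of_reach hw).imp (⟨hw, ·⟩) (⟨hw, ·⟩)
    · rintro (⟨hw, -⟩ | ⟨hw, -⟩) <;> exact hw
  · refine Set.disjoint_left.mpr fun w ⟨_, hsub⟩ ⟨_, hadd⟩ => hv ?_
    convert add_mem hsub hadd using 1
    abel
  · intro e he hinc
    have hboth := IsComp.mem_and_mem ⟨v, rfl⟩ he hinc
    have hedge := single_add_single_mem_lattice_of_adj (adj_of_mem he)
    rcases single_sub_or_add_mem_lattice_of_reach hboth.1 with h | h
    · refine .inl ⟨⟨hboth.1, h⟩, hboth.2, ?_⟩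
      convert add_mem h hedge using 1
      abel
    · refine .inr ⟨⟨hboth.1, h⟩, hboth.2, ?_⟩
      convert sub_mem h hedge using 1
      abel

lemma single_add_single_mem_lattice_of_not_bipOn (hD : G.IsComp D) (hnb : ¬ G.BipOn D)
    (hi : i ∈ D) (hj : j ∈ D) : (Pi.single i 1 + Pi.single j 1 : Fin n → ℤ) ∈ G.lattice := by
  obtain ⟨v, rfl⟩ := hD
  have hv : (Pi.single v 1 + Pi.single v 1 : Fin n → ℤ) ∈ G.lattice :=
    not_not.mp (mt bipOn_compSet_of_notMem_lattice hnb)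
  have hadd : ∀ {u}, u ∈ G.compSet v →
      (Pi.single v 1 + Pi.single u 1 : Fin n → ℤ) ∈ G.lattice := by
    intro u hu
    refine (single_sub_or_add_mem_lattice_of_reach hu).elim (fun h => ?_) id
    convert sub_mem hv h using 1
    abel
  convert sub_mem (add_mem (hadd hi) (hadd hj)) hv using 1
  abel

lemma two_dvd_sum_of_mem_lattice {s : Finset (Fin n)} (hs : ∀ e ∈ G.E, e.1 ∈ s ↔ e.2.1 ∈ s)
    {x : Fin n → ℤ} (hx : x ∈ G.lattice) : 2 ∣ ∑ v ∈ s, x v := by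
  classical
  induction hx using AddSubgroup.closure_induction with
  | mem _ hy =>
    obtain ⟨e, he, rfl⟩ := hy
    have hsum : ∑ v ∈ s, rhoZ e v
        = e.2.2 * ((if e.1 ∈ s then 1 else 0) + (if e.2.1 ∈ s then 1 else 0)) := by
      simp [rhoZ_eq_smul, Finset.sum_add_distrib, ← Finset.mul_sum]
    by_cases h : e.1 ∈ s
    · simp [hsum, h, (hs e he).mp h]
    · simp [hsum, h, mt (hs e he).mpr h]
  | zero => simp
  | add _ _ _ _ hx hy => simpa [Finset.sum_add_distrib] using dvd_add hx hy
  | neg _ _ hx => simpa using hx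

lemma single_add_single_notMem_lattice (hC : G.IsComp C) (hi : i ∈ C) (hj : j ∉ C) :
    (Pi.single i 1 + Pi.single j 1 : Fin n → ℤ) ∉ G.lattice := by
  classical
  intro hmem
  have := two_dvd_sum_of_mem_lattice (s := {v | v ∈ C})
    (fun e he => by simpa using hC.mem_iff he) hmem
  simp [Finset.sum_add_distrib, hi, hj] at this

lemma dvec_eq_zero_of_mem_of_not_bipOn {L R C' : Set (Fin n)} {k : Fin n} (hC : H.IsComp C)
    (hLR : H.BipWith C L R) (hC' : H.IsComp C') (hnb : ¬ H.BipOn C') (hk : k ∈ C') :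
    dvec L R k = 0 := by
  have hne : C ≠ C' := fun h => hnb (h ▸ ⟨L, R, hLR⟩)
  refine dvec_eq_zero fun hkLR => ?_
  exact (hC.disjoint hC' hne).notMem_of_mem_right hk (hLR.1 ▸ hkLR)

end SGraph

open SGraph in
/-- if a facet subgraph has more than `comp(G) + 1` components, then two
non-bipartite components of `H` lie in one non-bipartite component of `G`, and for
vertices `i, j` in them, `e_i + e_j ∈ ℤρ(E(G))`, it lies in the supporting hyperplane
of the facet, but `e_i + e_j ∉ ℤρ(E(H))`. -/
theorem stmt13 {n : ℕ} (G H : SGraph n) (hfs : IsFacetSubgraph G H)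
    (hgt : H.comp > G.comp + 1) :
    ∃ C1 C2 : Set (Fin n), H.IsComp C1 ∧ H.IsComp C2 ∧ C1 ≠ C2 ∧
      ¬ H.BipOn C1 ∧ ¬ H.BipOn C2 ∧
      (∃ D, G.IsComp D ∧ ¬ G.BipOn D ∧ C1 ⊆ D ∧ C2 ⊆ D) ∧
      ∀ i ∈ C1, ∀ j ∈ C2,
        (Pi.single i 1 + Pi.single j 1 : Fin n → ℤ) ∈ G.lattice ∧
        (Pi.single i 1 + Pi.single j 1 : Fin n → ℤ) ∉ H.lattice ∧
        ∀ C L R, H.IsComp C → ¬ G.IsComp C → FacetWitness G H C L R →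
          ∑ v, dvec L R v * toR (Pi.single i 1 + Pi.single j 1 : Fin n → ℤ) v = 0 := by
  obtain ⟨hHG, hbicomp, -⟩ := hfs
  have hlt : G.nonbipComps.ncard < H.nonbipComps.ncard := by
    have := G.comp_eq_bicomp_add_ncard_nonbipComps
    have := H.comp_eq_bicomp_add_ncard_nonbipComps
    omega
  obtain ⟨C1, ⟨hC1, hnb1⟩, C2, ⟨hC2, hnb2⟩, hne, D, ⟨hD, hnbD⟩, hC1D, hC2D⟩ :=
    exists_ne_nonbipComps_subset hHG hlt
  refine ⟨C1, C2, hC1, hC2, hne, hnb1, hnb2, ⟨D, hD, hnbD, hC1D, hC2D⟩, fun i hi j hj => ?_⟩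
  refine ⟨single_add_single_mem_lattice_of_not_bipOn hD hnbD (hC1D hi) (hC2D hj),
    single_add_single_notMem_lattice hC1 hi ((hC1.disjoint hC2 hne).notMem_of_mem_right hj),
    fun C L R hC _ hwit => ?_⟩
  rw [sum_dvec_mul_toR_single_add_single, dvec_eq_zero_of_mem_of_not_bipOn hC hwit.1 hC1 hnb1 hi,
    dvec_eq_zero_of_mem_of_not_bipOn hC hwit.1 hC2 hnb2 hj, add_zero]

end EdgeRing
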